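/- Let p1(α) = (1/2)α^T A1 α + b1^T α + d1 and p2(α) = (1/2)α^T A2 α + b2^T α + d2 be two quadratic functions on R^n. Suppose ā ≥ (1/2)‖A1 − A2‖_{1,1}, b̄ ≥ ‖b1 − b2‖_1, and |d1 − d2| ≥ d̄ ≥ 0, with ā > 0. Then any real solution α̂ of p1(α) = p2(α) satisfies ‖α̂‖_∞ ≥ (−b̄ + sqrt(b̄² + 4 ā d̄))/(2 ā). -/
import Mathlib


open Matrix

/-- lower bound on the ℓ∞-norm of any real root of the difference of two
quadratic functions, in the case `ā > 0`. The norm on `Fin n → ℝ` is the sup (ℓ∞) norm. -/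
theorem stmt_0 {n : ℕ} (A1 A2 : Matrix (Fin n) (Fin n) ℝ)
    (hA1 : A1.IsSymm) (hA2 : A2.IsSymm)
    (b1 b2 : Fin n → ℝ) (d1 d2 : ℝ) (abar bbar dbar : ℝ)
    (ha : (1/2) * (∑ i, ∑ j, |A1 i j - A2 i j|) ≤ abar)
    (hb : (∑ i, |b1 i - b2 i|) ≤ bbar)
    (hd : dbar ≤ |d1 - d2|) (hd0 : 0 ≤ dbar) (ha0 : 0 < abar)
    (αhat : Fin n → ℝ)
    (hroot : (1/2) * (αhat ⬝ᵥ A1.mulVec αhat) + b1 ⬝ᵥ αhat + d1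
           = (1/2) * (αhat ⬝ᵥ A2.mulVec αhat) + b2 ⬝ᵥ αhat + d2) :
    (-bbar + Real.sqrt (bbar ^ 2 + 4 * abar * dbar)) / (2 * abar) ≤ ‖αhat‖ := by
  set t := ‖αhat‖ with htdef
  have ht0 : 0 ≤ t := norm_nonneg _
  have hcoord : ∀ i, |αhat i| ≤ t := fun i => by
    simpa [Real.norm_eq_abs] using norm_le_pi_norm αhat i
  have hb0 : 0 ≤ bbar := le_trans (Finset.sum_nonneg fun i _ => abs_nonneg _) hb
  -- difference identities
  have hdiffA : ∑ i, ∑ j, αhat i * (A1 i j - A2 i j) * αhat j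
      = (αhat ⬝ᵥ A1.mulVec αhat) - (αhat ⬝ᵥ A2.mulVec αhat) := by
    simp only [dotProduct, mulVec, Finset.mul_sum, ← Finset.sum_sub_distrib]
    exact Finset.sum_congr rfl fun i _ =>
      Finset.sum_congr rfl fun j _ => by ring
  have hdiffb : ∑ i, (b1 i - b2 i) * αhat i
      = (b1 ⬝ᵥ αhat) - (b2 ⬝ᵥ αhat) := by
    simp only [dotProduct, ← Finset.sum_sub_distrib]
    exact Finset.sum_congr rfl fun i _ => by ring
  have heq : d1 - d2 = -((1/2) * ∑ i, ∑ j, αhat i * (A1 i j - A2 i j) * αhat j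
      + ∑ i, (b1 i - b2 i) * αhat i) := by
    rw [hdiffA, hdiffb]; linarith
  have hS : |∑ i, ∑ j, αhat i * (A1 i j - A2 i j) * αhat j|
      ≤ (∑ i, ∑ j, |A1 i j - A2 i j|) * t ^ 2 := by
    calc |∑ i, ∑ j, αhat i * (A1 i j - A2 i j) * αhat j|
        ≤ ∑ i, |∑ j, αhat i * (A1 i j - A2 i j) * αhat j| :=
          Finset.abs_sum_le_sum_abs _ _
      _ ≤ ∑ i, ∑ j, |αhat i * (A1 i j - A2 i j) * αhat j| :=
          Finset.sum_le_sum fun i _ => Finset.abs_sum_le_sum_abs _ _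
      _ ≤ ∑ i, ∑ j, |A1 i j - A2 i j| * t ^ 2 := by
          refine Finset.sum_le_sum fun i _ => Finset.sum_le_sum fun j _ => ?_
          rw [abs_mul, abs_mul]
          have h1 : |αhat i| * |αhat j| ≤ t * t :=
            mul_le_mul (hcoord i) (hcoord j) (abs_nonneg _) ht0
          nlinarith [h1, abs_nonneg (A1 i j - A2 i j)]
      _ = (∑ i, ∑ j, |A1 i j - A2 i j|) * t ^ 2 := by
          simp [Finset.sum_mul]
  have hT : |∑ i, (b1 i - b2 i) * αhat i| ≤ bbar * t := by
    calc |∑ i, (b1 i - b2 i) * αhat i|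
        ≤ ∑ i, |(b1 i - b2 i) * αhat i| := Finset.abs_sum_le_sum_abs _ _
      _ ≤ ∑ i, |b1 i - b2 i| * t := by
          refine Finset.sum_le_sum fun i _ => ?_
          rw [abs_mul]
          exact mul_le_mul_of_nonneg_left (hcoord i) (abs_nonneg _)
      _ = (∑ i, |b1 i - b2 i|) * t := by rw [Finset.sum_mul]
      _ ≤ bbar * t := mul_le_mul_of_nonneg_right hb ht0
  have key : dbar ≤ abar * t ^ 2 + bbar * t := by
    have h1 : |d1 - d2| ≤ (1/2) * (∑ i, ∑ j, |A1 i j - A2 i j|) * t ^ 2 + bbar * t := by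
      rw [heq, abs_neg]
      calc |(1/2) * ∑ i, ∑ j, αhat i * (A1 i j - A2 i j) * αhat j
          + ∑ i, (b1 i - b2 i) * αhat i|
          ≤ |(1/2) * ∑ i, ∑ j, αhat i * (A1 i j - A2 i j) * αhat j|
            + |∑ i, (b1 i - b2 i) * αhat i| := abs_add_le _ _
        _ ≤ (1/2) * (∑ i, ∑ j, |A1 i j - A2 i j|) * t ^ 2 + bbar * t := by
            rw [abs_mul]
            have : |(1:ℝ)/2| = 1/2 := by norm_num
            rw [this]
            nlinarith [hS, hT]
    nlinarith [h1, hd, sq_nonneg t]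
  have hsq : Real.sqrt (bbar ^ 2 + 4 * abar * dbar) ≤ 2 * abar * t + bbar := by
    have h2 : bbar ^ 2 + 4 * abar * dbar ≤ (2 * abar * t + bbar) ^ 2 := by
      nlinarith [key, ha0, ht0, hb0]
    calc Real.sqrt (bbar ^ 2 + 4 * abar * dbar)
        ≤ Real.sqrt ((2 * abar * t + bbar) ^ 2) := Real.sqrt_le_sqrt h2
      _ = 2 * abar * t + bbar := Real.sqrt_sq (by positivity)
  rw [div_le_iff₀ (by positivity)]
  linarith
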